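/- (Quantitative asymptotic completeness of piecewise-constant bound propagation, formal content of Theorem 1.) Let σ : ℝ → ℝ be nondecreasing and L_σ-Lipschitz, and consider an L-layer network with weights W_l and biases b_l. Fix an input box [l_0, u_0] ⊂ ℝ^{n_0}. Define exact interval bound propagation by: ẑ_l^lo = (W_l)_+ l_{l−1} + (W_l)_− u_{l−1} + b_l, ẑ_l^hi = (W_l)_+ u_{l−1} + (W_l)_− l_{l−1} + b_l, l_l = σ.(ẑ_l^lo), u_l = σ.(ẑ_l^hi). Define the piecewise-constant propagation using segment boundaries M_0 < ⋯ < M_n with mesh Δ covering all pre-activation ranges, replacing l_l by the componentwise segment-infimum γ̲ of the segment containing the (piecewise-constant–propagated) lower pre-activation bound, and u_l by the componentwise segment-supremum γ̄ of the segment containing the upper pre-activation bound; denote these bounds l̃_l, ũ_l (with l̃_0 = l_0, ũ_0 = u_0). Then the computed bounds are sound (l̃_l ≤ l_l and ũ_l ≥ u_l componentwise) and the gap g_L := max over output components of max(ũ_L − u_L, l_L − l̃_L) satisfies g_L ≤ L_σ Δ · Σ_{k=1}^{L} ∏_{j=k+1}^{L} ( L_σ ‖W_j‖_{∞→∞} ).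 In particular, the piecewise-constant bounds converge to the exact interval-propagation bounds as Δ → 0. -/

import Mathlib

open scoped NNReal

/-- The induced `∞→∞` operator norm of a matrix: the maximum absolute row sum. -/
noncomputable def opNormInf {m n : ℕ} (W : Matrix (Fin m) (Fin n) ℝ) : ℝ :=
  ⨆ i, ∑ j, |W i j|

/-- Entrywise positive part of a matrix: `(W_+)_{jk} = max(W_{jk}, 0)`. -/
def matPos {m n : ℕ} (W : Matrix (Fin m) (Fin n) ℝ) : Matrix (Fin m) (Fin n) ℝ :=
  Matrix.of fun i j => max (W i j) 0

/-- Entrywise negative part of a matrix: `(W_−)_{jk} = min(W_{jk}, 0)`. -/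
def matNeg {m n : ℕ} (W : Matrix (Fin m) (Fin n) ℝ) : Matrix (Fin m) (Fin n) ℝ :=
  Matrix.of fun i j => min (W i j) 0

/-- Exact interval bound propagation (IBP): the pair `(l_l, u_l)` of lower/upper bound
vectors at layer `l`, with `l_0, u_0` given, `ẑ_l^lo = (W_l)_+ l_l + (W_l)_− u_l + b_l`,
`ẑ_l^hi = (W_l)_+ u_l + (W_l)_− l_l + b_l`, `l_{l+1} = σ.(ẑ_l^lo)`,
`u_{l+1} = σ.(ẑ_l^hi)`. -/
noncomputable def ibp (σ : ℝ → ℝ) (dims : ℕ → ℕ)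
    (W : ∀ l : ℕ, Matrix (Fin (dims (l + 1))) (Fin (dims l)) ℝ)
    (b : ∀ l : ℕ, Fin (dims (l + 1)) → ℝ)
    (l0 u0 : Fin (dims 0) → ℝ) : (l : ℕ) → (Fin (dims l) → ℝ) × (Fin (dims l) → ℝ)
  | 0 => (l0, u0)
  | l + 1 =>
      (fun j => σ (((matPos (W l)).mulVec (ibp σ dims W b l0 u0 l).1
          + (matNeg (W l)).mulVec (ibp σ dims W b l0 u0 l).2 + b l) j),
       fun j => σ (((matPos (W l)).mulVec (ibp σ dims W b l0 u0 l).2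
          + (matNeg (W l)).mulVec (ibp σ dims W b l0 u0 l).1 + b l) j))

/-!
Induct over the layers with the invariant that `[l̃_l, ũ_l]` contains `[l_l, u_l]` with both
gaps at most `g_l`. Widening the input interval of the affine map `x ↦ W x + b` widens its
interval image, by at most `‖W‖_{∞→∞} g_l`. Since `σ` is monotone, the segment supremum
(infimum) is `σ` at the right (left) end of the segment, which lies beyond the propagated
pre-activation bound: this gives soundness. By the Lipschitz bound the new gap is at most
`L_σ (Δ + ‖W_l‖_{∞→∞} g_l)`, and unrolling this recursion from `g_0 = 0` gives the
stated sum of products.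
-/

open Finset Matrix

theorem sum_range_prod_Ico_succ {R : Type*} [CommSemiring R] (f : ℕ → R) (n : ℕ) :
    ∑ k ∈ range (n + 1), ∏ j ∈ Ico (k + 1) (n + 1), f j =
      (∑ k ∈ range n, ∏ j ∈ Ico (k + 1) n, f j) * f n + 1 := by
  rw [sum_range_succ, Ico_self, prod_empty, sum_mul]
  congr 1
  exact sum_congr rfl fun k hk => prod_Ico_succ_top (mem_range.1 hk) f

lemma sum_abs_le_opNormInf {m n : ℕ} (W : Matrix (Fin m) (Fin n) ℝ) (i : Fin m) :
    ∑ j, |W i j| ≤ opNormInf W :=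
  le_ciSup (f := fun i => ∑ j, |W i j|) (Set.finite_range _).bddAbove i

lemma opNormInf_nonneg {m n : ℕ} (W : Matrix (Fin m) (Fin n) ℝ) : 0 ≤ opNormInf W :=
  Real.iSup_nonneg fun _ => sum_nonneg fun _ _ => abs_nonneg _

lemma max_mul_add_min_mul_le_abs_mul {a s t g : ℝ} (hs : s ≤ g) (ht : -t ≤ g) :
    max a 0 * s + min a 0 * t ≤ |a| * g := by
  rcases le_total 0 a with ha | ha
  · rw [max_eq_left ha, min_eq_right ha, abs_of_nonneg ha]
    nlinarith
  · rw [max_eq_right ha, min_eq_left ha, abs_of_nonpos ha]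
    nlinarith

section IntervalAffine

variable {m n : ℕ} (W : Matrix (Fin m) (Fin n) ℝ) (b : Fin m → ℝ)

lemma matPos_mulVec_add_matNeg_mulVec_mono {x x' y y' : Fin n → ℝ} (hx : x ≤ x')
    (hy : y' ≤ y) :
    matPos W *ᵥ x + matNeg W *ᵥ y + b ≤ matPos W *ᵥ x' + matNeg W *ᵥ y' + b := by
  intro i
  simp only [Pi.add_apply, mulVec, dotProduct, matPos, matNeg, of_apply, add_le_add_iff_right,
    ← sum_add_distrib]
  exact sum_le_sum fun k _ => add_le_add
    (mul_le_mul_of_nonneg_left (hx k) (le_max_right _ _))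
    (mul_le_mul_of_nonpos_left (hy k) (min_le_right _ _))

lemma matPos_mulVec_add_matNeg_mulVec_sub_le {x x' y y' : Fin n → ℝ} {g : ℝ} (hg : 0 ≤ g)
    (hx : ∀ k, x' k - x k ≤ g) (hy : ∀ k, y k - y' k ≤ g) (i : Fin m) :
    (matPos W *ᵥ x' + matNeg W *ᵥ y' + b) i - (matPos W *ᵥ x + matNeg W *ᵥ y + b) i ≤
      opNormInf W * g :=
  calc (matPos W *ᵥ x' + matNeg W *ᵥ y' + b) i - (matPos W *ᵥ x + matNeg W *ᵥ y + b) i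
      = ∑ k, (max (W i k) 0 * (x' k - x k) + min (W i k) 0 * (y' k - y k)) := by
        simp only [Pi.add_apply, mulVec, dotProduct, matPos, matNeg, of_apply, mul_sub,
          sum_add_distrib, sum_sub_distrib]
        ring
    _ ≤ ∑ k, |W i k| * g := sum_le_sum fun k _ =>
        max_mul_add_min_mul_le_abs_mul (hx k) (by linarith [hy k])
    _ = (∑ k, |W i k|) * g := (sum_mul _ _ _).symm
    _ ≤ opNormInf W * g := mul_le_mul_of_nonneg_right (sum_abs_le_opNormInf W i) hg

end IntervalAffine

section SegmentEnclosure

variable {σ : ℝ → ℝ} {K : ℝ≥0} {z z' a c : ℝ}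

lemma Monotone.le_sSup_image_Icc (hmono : Monotone σ) (hz : z ≤ z') (hz' : z' ∈ Set.Icc a c) :
    σ z ≤ sSup (σ '' Set.Icc a c) := by
  rw [(hmono.monotoneOn _).sSup_image_Icc (hz'.1.trans hz'.2)]
  exact hmono (hz.trans hz'.2)

lemma Monotone.sInf_image_Icc_le (hmono : Monotone σ) (hz : z' ≤ z) (hz' : z' ∈ Set.Icc a c) :
    sInf (σ '' Set.Icc a c) ≤ σ z := by
  rw [(hmono.monotoneOn _).sInf_image_Icc (hz'.1.trans hz'.2)]
  exact hmono (hz'.1.trans hz)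

lemma LipschitzWith.sub_le_mul_sub (hσ : LipschitzWith K σ) {x y : ℝ} (hxy : y ≤ x) :
    σ x - σ y ≤ K * (x - y) := by
  have := hσ.le_add_mul x y
  rw [Real.dist_eq, abs_of_nonneg (sub_nonneg.2 hxy)] at this
  linarith

lemma LipschitzWith.sSup_image_Icc_sub_le (hσ : LipschitzWith K σ) (hmono : Monotone σ)
    (hz : z ≤ z') (hz' : z' ∈ Set.Icc a c) :
    sSup (σ '' Set.Icc a c) - σ z ≤ K * (c - a + (z' - z)) := by
  rw [(hmono.monotoneOn _).sSup_image_Icc (hz'.1.trans hz'.2)]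
  calc σ c - σ z ≤ K * (c - z) := hσ.sub_le_mul_sub (hz.trans hz'.2)
    _ ≤ K * (c - a + (z' - z)) := by gcongr; linarith [hz'.1]

lemma LipschitzWith.sub_sInf_image_Icc_le (hσ : LipschitzWith K σ) (hmono : Monotone σ)
    (hz : z' ≤ z) (hz' : z' ∈ Set.Icc a c) :
    σ z - sInf (σ '' Set.Icc a c) ≤ K * (c - a + (z - z')) := by
  rw [(hmono.monotoneOn _).sInf_image_Icc (hz'.1.trans hz'.2)]
  calc σ z - σ a ≤ K * (z - a) := hσ.sub_le_mul_sub (hz'.1.trans hz)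
    _ ≤ K * (c - a + (z - z')) := by gcongr; linarith [hz'.2]

end SegmentEnclosure

structure EnclosesWithin {ι : Type*} (lt ut l u : ι → ℝ) (g : ℝ) : Prop where
  lower_le : lt ≤ l
  le_upper : u ≤ ut
  upper_sub_le : ∀ j, ut j - u j ≤ g
  sub_lower_le : ∀ j, l j - lt j ≤ g

theorem EnclosesWithin.layer {m n nseg : ℕ} {σ : ℝ → ℝ} (hmono : Monotone σ) {K : ℝ≥0}
    (hσ : LipschitzWith K σ) (W : Matrix (Fin m) (Fin n) ℝ) (b : Fin m → ℝ)
    {lt ut l u : Fin n → ℝ} {g : ℝ} (h : EnclosesWithin lt ut l u g) (hg : 0 ≤ g)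
    {M : Fin (nseg + 1) → ℝ} {Δ : ℝ}
    (hmesh : ∀ i : Fin nseg, M i.succ - M i.castSucc ≤ Δ)
    {lt' ut' : Fin m → ℝ}
    (hup : ∀ j, ∃ i : Fin nseg, (matPos W *ᵥ ut + matNeg W *ᵥ lt + b) j ∈
      Set.Icc (M i.castSucc) (M i.succ) ∧
        ut' j = sSup (σ '' Set.Icc (M i.castSucc) (M i.succ)))
    (hlo : ∀ j, ∃ i : Fin nseg, (matPos W *ᵥ lt + matNeg W *ᵥ ut + b) j ∈
      Set.Icc (M i.castSucc) (M i.succ) ∧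
        lt' j = sInf (σ '' Set.Icc (M i.castSucc) (M i.succ))) :
    EnclosesWithin lt' ut' (fun j => σ ((matPos W *ᵥ l + matNeg W *ᵥ u + b) j))
      (fun j => σ ((matPos W *ᵥ u + matNeg W *ᵥ l + b) j))
      (K * Δ + K * (opNormInf W * g)) := by
  have hzup := matPos_mulVec_add_matNeg_mulVec_mono W b h.le_upper h.lower_le
  have hzlo := matPos_mulVec_add_matNeg_mulVec_mono W b h.lower_le h.le_upper
  have hgup := matPos_mulVec_add_matNeg_mulVec_sub_le W b hg h.upper_sub_le h.sub_lower_le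
  have hglo := matPos_mulVec_add_matNeg_mulVec_sub_le W b hg h.sub_lower_le h.upper_sub_le
  have hstep : ∀ (i : Fin nseg) {s : ℝ}, s ≤ opNormInf W * g →
      (K : ℝ) * (M i.succ - M i.castSucc + s) ≤ K * Δ + K * (opNormInf W * g) := by
    intro i s hs
    rw [← mul_add]
    exact mul_le_mul_of_nonneg_left (add_le_add (hmesh i) hs) K.coe_nonneg
  refine ⟨fun j => ?_, fun j => ?_, fun j => ?_, fun j => ?_⟩
  · obtain ⟨i, hmem, heq⟩ := hlo j
    rw [heq]
    exact hmono.sInf_image_Icc_le (hzlo j) hmem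
  · obtain ⟨i, hmem, heq⟩ := hup j
    rw [heq]
    exact hmono.le_sSup_image_Icc (hzup j) hmem
  · obtain ⟨i, hmem, heq⟩ := hup j
    rw [heq]
    exact (hσ.sSup_image_Icc_sub_le hmono (hzup j) hmem).trans (hstep i (hgup j))
  · obtain ⟨i, hmem, heq⟩ := hlo j
    rw [heq]
    exact (hσ.sub_sInf_image_Icc_le hmono (hzlo j) hmem).trans (hstep i (hglo j))

theorem ibp_enclosesWithin {σ : ℝ → ℝ} (hmono : Monotone σ) {K : ℝ≥0}
    (hσ : LipschitzWith K σ) {dims : ℕ → ℕ}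
    (W : ∀ l : ℕ, Matrix (Fin (dims (l + 1))) (Fin (dims l)) ℝ)
    (b : ∀ l : ℕ, Fin (dims (l + 1)) → ℝ) (l0 u0 : Fin (dims 0) → ℝ)
    {nseg : ℕ} {M : Fin (nseg + 1) → ℝ} {Δ : ℝ}
    (hmesh : ∀ i : Fin nseg, M i.succ - M i.castSucc ≤ Δ) (hΔ : 0 ≤ Δ)
    {lt ut : ∀ l : ℕ, Fin (dims l) → ℝ} (hlt0 : lt 0 = l0) (hut0 : ut 0 = u0)
    (hup : ∀ l : ℕ, ∀ j : Fin (dims (l + 1)), ∃ i : Fin nseg,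
      (matPos (W l) *ᵥ ut l + matNeg (W l) *ᵥ lt l + b l) j ∈
          Set.Icc (M i.castSucc) (M i.succ) ∧
        ut (l + 1) j = sSup (σ '' Set.Icc (M i.castSucc) (M i.succ)))
    (hlo : ∀ l : ℕ, ∀ j : Fin (dims (l + 1)), ∃ i : Fin nseg,
      (matPos (W l) *ᵥ lt l + matNeg (W l) *ᵥ ut l + b l) j ∈
          Set.Icc (M i.castSucc) (M i.succ) ∧
        lt (l + 1) j = sInf (σ '' Set.Icc (M i.castSucc) (M i.succ)))
    (l : ℕ) :
    EnclosesWithin (lt l) (ut l) (ibp σ dims W b l0 u0 l).1 (ibp σ dims W b l0 u0 l).2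
      (K * Δ * ∑ k ∈ range l, ∏ j ∈ Ico (k + 1) l, ((K : ℝ) * opNormInf (W j))) := by
  set S : ℕ → ℝ := fun l =>
    ∑ k ∈ range l, ∏ j ∈ Ico (k + 1) l, ((K : ℝ) * opNormInf (W j))
  have hS : ∀ l, 0 ≤ S l := fun l => sum_nonneg fun _ _ => prod_nonneg fun _ _ =>
    mul_nonneg K.coe_nonneg (opNormInf_nonneg _)
  induction l with
  | zero =>
    rw [hlt0, hut0]
    exact ⟨le_rfl, le_rfl, fun _ => by simp [ibp], fun _ => by simp [ibp]⟩
  | succ l ih =>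
    have hgap : (K : ℝ) * Δ * S (l + 1) = K * Δ + K * (opNormInf (W l) * (K * Δ * S l)) := by
      rw [show S (l + 1) = S l * (K * opNormInf (W l)) + 1 from sum_range_prod_Ico_succ _ l]
      ring
    rw [hgap]
    exact ih.layer hmono hσ (W l) (b l) (mul_nonneg (mul_nonneg K.coe_nonneg hΔ) (hS l)) hmesh
      (hup l) (hlo l)

theorem pwc_propagation_sound_and_asymptotically_complete_general
    (σ : ℝ → ℝ) (hmono : Monotone σ) (Lσ : ℝ≥0) (hσ : LipschitzWith Lσ σ)
    (L : ℕ) (dims : ℕ → ℕ)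
    (W : ∀ l : ℕ, Matrix (Fin (dims (l + 1))) (Fin (dims l)) ℝ)
    (b : ∀ l : ℕ, Fin (dims (l + 1)) → ℝ)
    (l0 u0 : Fin (dims 0) → ℝ)
    (nseg : ℕ) (hn : 0 < nseg) (M : Fin (nseg + 1) → ℝ) (hM : StrictMono M)
    (Δ : ℝ)
    (hΔ : Δ = Finset.univ.sup' ⟨⟨0, hn⟩, Finset.mem_univ _⟩
      fun i : Fin nseg => M i.succ - M i.castSucc)
    -- the piecewise-constant propagated bounds `l̃, ũ`
    (lt ut : ∀ l : ℕ, Fin (dims l) → ℝ)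
    (hlt0 : lt 0 = l0) (hut0 : ut 0 = u0)
    -- upper propagation: `ũ_{l+1}` is the segment supremum of `σ` on the segment
    -- (which exists, i.e. the segmentation covers the pre-activation range)
    -- containing the propagated upper pre-activation bound
    (hup : ∀ l : ℕ, ∀ j : Fin (dims (l + 1)), ∃ i : Fin nseg,
      ((matPos (W l)).mulVec (ut l) + (matNeg (W l)).mulVec (lt l) + b l) j ∈
          Set.Icc (M i.castSucc) (M i.succ) ∧
        ut (l + 1) j = sSup (σ '' Set.Icc (M i.castSucc) (M i.succ)))
    -- lower propagation: `l̃_{l+1}` is the segment infimum of `σ` on the segment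
    -- containing the propagated lower pre-activation bound
    (hlo : ∀ l : ℕ, ∀ j : Fin (dims (l + 1)), ∃ i : Fin nseg,
      ((matPos (W l)).mulVec (lt l) + (matNeg (W l)).mulVec (ut l) + b l) j ∈
          Set.Icc (M i.castSucc) (M i.succ) ∧
        lt (l + 1) j = sInf (σ '' Set.Icc (M i.castSucc) (M i.succ))) :
    -- soundness: `l̃_l ≤ l_l` and `u_l ≤ ũ_l` componentwise at every layer
    (∀ l : ℕ, lt l ≤ (ibp σ dims W b l0 u0 l).1 ∧ (ibp σ dims W b l0 u0 l).2 ≤ ut l) ∧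
      -- quantitative gap bound at the output layer
      ∀ j : Fin (dims L),
        ut L j - (ibp σ dims W b l0 u0 L).2 j ≤
            (Lσ : ℝ) * Δ *
              ∑ k ∈ Finset.range L, ∏ j' ∈ Finset.Ico (k + 1) L,
                ((Lσ : ℝ) * opNormInf (W j')) ∧
          (ibp σ dims W b l0 u0 L).1 j - lt L j ≤
            (Lσ : ℝ) * Δ *
              ∑ k ∈ Finset.range L, ∏ j' ∈ Finset.Ico (k + 1) L,
                ((Lσ : ℝ) * opNormInf (W j')) := by
  have hmesh : ∀ i : Fin nseg, M i.succ - M i.castSucc ≤ Δ := fun i =>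
    hΔ ▸ le_sup' (fun i : Fin nseg => M i.succ - M i.castSucc) (mem_univ i)
  have hΔ0 : 0 ≤ Δ := (sub_nonneg.2 (hM Fin.castSucc_lt_succ).le).trans (hmesh ⟨0, hn⟩)
  have hencl := ibp_enclosesWithin hmono hσ W b l0 u0 hmesh hΔ0 hlt0 hut0 hup hlo
  exact ⟨fun l => ⟨(hencl l).lower_le, (hencl l).le_upper⟩,
    fun j => ⟨(hencl L).upper_sub_le j, (hencl L).sub_lower_le j⟩⟩

/-- Quantitative asymptotic completeness of piecewise-constant bound propagation
(formal content of Theorem 1): for a nondecreasing `L_σ`-Lipschitz activation, the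
piecewise-constant propagated bounds `l̃_l, ũ_l` (which replace the activation applied to
the pre-activation bounds by the segment infimum/supremum of `σ` on the segment containing
the propagated lower/upper pre-activation bound) are sound with respect to exact interval
bound propagation, and the output gap is at most
`L_σ Δ · Σ_{k=1}^{L} Π_{j=k+1}^{L} (L_σ ‖W_j‖_{∞→∞})`; hence the piecewise-constant
bounds converge to the exact IBP bounds as the mesh `Δ → 0`. -/
theorem pwc_propagation_sound_and_asymptotically_complete
    (σ : ℝ → ℝ) (hmono : Monotone σ) (Lσ : ℝ≥0) (hσ : LipschitzWith Lσ σ)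
    (L : ℕ) (dims : ℕ → ℕ)
    (W : ∀ l : ℕ, Matrix (Fin (dims (l + 1))) (Fin (dims l)) ℝ)
    (b : ∀ l : ℕ, Fin (dims (l + 1)) → ℝ)
    (l0 u0 : Fin (dims 0) → ℝ) (hl0u0 : l0 ≤ u0)
    (nseg : ℕ) (hn : 0 < nseg) (M : Fin (nseg + 1) → ℝ) (hM : StrictMono M)
    (Δ : ℝ)
    (hΔ : Δ = Finset.univ.sup' ⟨⟨0, hn⟩, Finset.mem_univ _⟩
      fun i : Fin nseg => M i.succ - M i.castSucc)
    -- the piecewise-constant propagated bounds `l̃, ũ`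
    (lt ut : ∀ l : ℕ, Fin (dims l) → ℝ)
    (hlt0 : lt 0 = l0) (hut0 : ut 0 = u0)
    -- upper propagation: `ũ_{l+1}` is the segment supremum of `σ` on the segment
    -- (which exists, i.e. the segmentation covers the pre-activation range)
    -- containing the propagated upper pre-activation bound
    (hup : ∀ l : ℕ, ∀ j : Fin (dims (l + 1)), ∃ i : Fin nseg,
      ((matPos (W l)).mulVec (ut l) + (matNeg (W l)).mulVec (lt l) + b l) j ∈
          Set.Icc (M i.castSucc) (M i.succ) ∧
        ut (l + 1) j = sSup (σ '' Set.Icc (M i.castSucc) (M i.succ)))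
    -- lower propagation: `l̃_{l+1}` is the segment infimum of `σ` on the segment
    -- containing the propagated lower pre-activation bound
    (hlo : ∀ l : ℕ, ∀ j : Fin (dims (l + 1)), ∃ i : Fin nseg,
      ((matPos (W l)).mulVec (lt l) + (matNeg (W l)).mulVec (ut l) + b l) j ∈
          Set.Icc (M i.castSucc) (M i.succ) ∧
        lt (l + 1) j = sInf (σ '' Set.Icc (M i.castSucc) (M i.succ))) :
    -- soundness: `l̃_l ≤ l_l` and `u_l ≤ ũ_l` componentwise at every layer
    (∀ l : ℕ, lt l ≤ (ibp σ dims W b l0 u0 l).1 ∧ (ibp σ dims W b l0 u0 l).2 ≤ ut l) ∧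
      -- quantitative gap bound at the output layer
      ∀ j : Fin (dims L),
        ut L j - (ibp σ dims W b l0 u0 L).2 j ≤
            (Lσ : ℝ) * Δ *
              ∑ k ∈ Finset.range L, ∏ j' ∈ Finset.Ico (k + 1) L,
                ((Lσ : ℝ) * opNormInf (W j')) ∧
          (ibp σ dims W b l0 u0 L).1 j - lt L j ≤
            (Lσ : ℝ) * Δ *
              ∑ k ∈ Finset.range L, ∏ j' ∈ Finset.Ico (k + 1) L,
                ((Lσ : ℝ) * opNormInf (W j')) :=
  pwc_propagation_sound_and_asymptotically_complete_general σ hmono Lσ hσ L dims W b l0 u0 nseg hn M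
    hM Δ hΔ lt ut hlt0 hut0 hup hlo
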